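/- Let G be an edge-maximal distance critical simple graph and let S be the set of vertices of G that belong to some determining pair (of some vertex). Then the complement set T = V(G) − S induces a clique in G; that is, any two distinct vertices of T are adjacent in G. -/

import Mathlib

/-- A graph is *distance critical* if for every vertex `v` there is a pair of vertices of
`G − v` whose distance in `G − v` differs from their distance in `G`
(distances are `ℕ∞`-valued, `⊤` when there is no connecting path). -/
def IsDistanceCritical {V : Type*} (G : SimpleGraph V) : Prop :=
  ∀ v : V, ∃ x y : ({v}ᶜ : Set V),
    (G.induce ({v}ᶜ : Set V)).edist x y ≠ G.edist (x : V) (y : V)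

/-- `{a, b}` is a *determining pair* for `v` : `a` and `b` are distinct, nonadjacent,
and `v` is their unique common neighbor. -/
def IsDeterminingPair {V : Type*} (G : SimpleGraph V) (v a b : V) : Prop :=
  a ≠ b ∧ ¬ G.Adj a b ∧ G.Adj a v ∧ G.Adj b v ∧
    ∀ w : V, G.Adj a w → G.Adj b w → w = v

/-- The graph obtained from `G` by adding the edge `xy`. -/
def addEdge {V : Type*} (G : SimpleGraph V) (x y : V) : SimpleGraph V :=
  G ⊔ SimpleGraph.edge x y

/-! A vertex `v` is critical exactly when it has a determining pair. If deleting `v` increases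
the distance between `x` and `y`, every shortest `x`-`y` path passes through `v`, entering from a
neighbour `a` and leaving to a neighbour `b`; if `a = b`, `a ~ b`, or `a` and `b` had a second
common neighbour, the path could be rerouted around `v` without getting longer. Conversely a
determining pair is at distance `2` in `G` but not in `G - v`. Adding an edge between two vertices
that lie in no determining pair leaves every determining pair intact, so the larger graph would
still be distance critical. -/

namespace SimpleGraph

variable {V W : Type*} {G : SimpleGraph V}

lemma Hom.edist_le {G' : SimpleGraph W} (f : G →g G') (a b : V) :
    G'.edist (f a) (f b) ≤ G.edist a b := by
  by_cases hr : G.Reachable a b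
  · obtain ⟨w, hw⟩ := hr.exists_walk_length_eq_edist
    rw [← hw, ← w.length_map f]
    exact (w.map f).edist_le
  · simp [edist_eq_top_of_not_reachable hr]

lemma edist_le_edist_induce (s : Set V) (a b : s) : G.edist a b ≤ (G.induce s).edist a b :=
  (Embedding.induce s).toHom.edist_le a b

lemma edist_induce_le_length {s : Set V} {a b : V} (w : G.Walk a b)
    (hw : ∀ x ∈ w.support, x ∈ s) :
    (G.induce s).edist ⟨a, hw a w.start_mem_support⟩ ⟨b, hw b w.end_mem_support⟩ ≤
      w.length := by
  calc _ ≤ ((w.induce s hw).length : ℕ∞) := (w.induce s hw).edist_le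
    _ = w.length := by
      rw [← (w.induce s hw).length_map (Embedding.induce s).toHom, Walk.map_induce]; rfl

lemma Walk.IsPath.exists_eq_append_cons_cons {x y v : V} {q : G.Walk x y} (hq : q.IsPath)
    (hv : v ∈ q.support) (hx : x ≠ v) (hy : y ≠ v) :
    ∃ (a b : V) (r₀ : G.Walk x a) (r₁ : G.Walk b y) (ha : G.Adj a v) (hb : G.Adj v b),
      q = r₀.append (.cons ha (.cons hb r₁)) ∧ v ∉ r₀.support ∧ v ∉ r₁.support := by
  classical
  set t := q.takeUntil v hv
  set d := q.dropUntil v hv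
  have ht : ¬ t.Nil := Walk.not_nil_of_ne hx
  have hd : ¬ d.Nil := Walk.not_nil_of_ne hy.symm
  have hq' : q = (t.dropLast.concat (t.adj_penultimate ht)).append
      (.cons (d.adj_snd hd) d.tail) := by
    rw [Walk.concat_dropLast, Walk.cons_tail_eq _ hd, Walk.take_spec]
  refine ⟨_, _, t.dropLast, d.tail, t.adj_penultimate ht, d.adj_snd hd, ?_, ?_, ?_⟩
  · rwa [Walk.concat_append] at hq'
  · have : t.IsPath := hq.takeUntil hv
    rw [← Walk.concat_dropLast (t.adj_penultimate ht), Walk.concat_isPath_iff] at this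
    exact this.2
  · have : d.IsPath := hq.dropUntil hv
    rw [← Walk.cons_tail_eq d hd, Walk.cons_isPath_iff] at this
    exact this.2

end SimpleGraph

open SimpleGraph

section

variable {V : Type*} {G : SimpleGraph V}

lemma IsDeterminingPair.symm {v a b : V} (h : IsDeterminingPair G v a b) :
    IsDeterminingPair G v b a :=
  let ⟨hab, hnadj, hav, hbv, huniq⟩ := h
  ⟨hab.symm, fun h => hnadj h.symm, hbv, hav, fun w hb ha => huniq w ha hb⟩

lemma IsDeterminingPair.congr_adj {G' : SimpleGraph V} {v a b : V}
    (h : IsDeterminingPair G v a b) (ha : ∀ w, G'.Adj a w ↔ G.Adj a w)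
    (hb : ∀ w, G'.Adj b w ↔ G.Adj b w) : IsDeterminingPair G' v a b := by
  simpa only [IsDeterminingPair, ha, hb] using h

lemma addEdge_adj_of_ne {x y u w : V} (hx : u ≠ x) (hy : u ≠ y) :
    (addEdge G x y).Adj u w ↔ G.Adj u w := by
  simp [addEdge, edge_adj, hx, hy]

lemma isDeterminingPair_of_lt_length_avoiding {x y a b v : V} {r₀ : G.Walk x a}
    {r₁ : G.Walk b y} (ha : G.Adj a v) (hb : G.Adj v b) (h₀ : v ∉ r₀.support)
    (h₁ : v ∉ r₁.support)
    (hlong : ∀ w : G.Walk x y, v ∉ w.support →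
      (r₀.append (.cons ha (.cons hb r₁))).length < w.length) :
    IsDeterminingPair G v a b := by
  refine ⟨?_, fun hab => ?_, ha, hb.symm, fun w haw hbw => ?_⟩
  · rintro rfl
    have := hlong (r₀.append r₁) (by simp [h₀, h₁])
    simp only [Walk.length_append, Walk.length_cons] at this
    omega
  · have := hlong (r₀.append (.cons hab r₁)) (by simp [h₀, h₁, ha.ne'])
    simp only [Walk.length_append, Walk.length_cons] at this
    omega
  · by_contra hw
    have := hlong (r₀.append (.cons haw (.cons hbw.symm r₁)))
      (by simp [h₀, h₁, ha.ne', Ne.symm hw])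
    simp only [Walk.length_append, Walk.length_cons] at this
    omega

lemma exists_isDeterminingPair_of_edist_induce_ne {v : V} {x y : ({v}ᶜ : Set V)}
    (h : (G.induce {v}ᶜ).edist x y ≠ G.edist x y) : ∃ a b, IsDeterminingPair G v a b := by
  have hlt : G.edist x y < (G.induce {v}ᶜ).edist x y :=
    (edist_le_edist_induce _ x y).lt_of_ne (Ne.symm h)
  have hr : G.Reachable x y := reachable_of_edist_ne_top hlt.ne_top
  obtain ⟨q, hq, hql⟩ := hr.exists_path_of_dist
  have hshort : ∀ w : G.Walk x y, v ∉ w.support → q.length < w.length := by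
    intro w hw
    have hs : ∀ z ∈ w.support, z ∈ ({v}ᶜ : Set V) := fun z hz hzv => hw (hzv ▸ hz)
    have := hlt.trans_le (edist_induce_le_length w hs)
    rwa [← hr.coe_dist_eq_edist, ← hql, Nat.cast_lt] at this
  have hv : v ∈ q.support := by_contra fun hv => (hshort q hv).false
  obtain ⟨a, b, r₀, r₁, ha, hb, rfl, h₀, h₁⟩ := hq.exists_eq_append_cons_cons hv x.2 y.2
  exact ⟨a, b, isDeterminingPair_of_lt_length_avoiding ha hb h₀ h₁ hshort⟩

lemma IsDeterminingPair.edist_induce_ne {v a b : V} (h : IsDeterminingPair G v a b) :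
    (G.induce {v}ᶜ).edist ⟨a, h.2.2.1.ne⟩ ⟨b, h.2.2.2.1.ne⟩ ≠ G.edist a b := by
  obtain ⟨hab, hnadj, hav, hbv, huniq⟩ := h
  rw [edist_eq_two_iff.2 ⟨hab, hnadj, v, G.mem_commonNeighbors.2 ⟨hav, hbv⟩⟩]
  intro h2
  obtain ⟨-, -, c, hc⟩ := edist_eq_two_iff.1 h2
  rw [mem_commonNeighbors] at hc
  exact c.2 (huniq c hc.1 hc.2)

theorem isDistanceCritical_iff :
    IsDistanceCritical G ↔ ∀ v, ∃ a b, IsDeterminingPair G v a b :=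
  ⟨fun hG v => let ⟨_, _, h⟩ := hG v; exists_isDeterminingPair_of_edist_induce_ne h,
    fun hG v => let ⟨_, _, h⟩ := hG v; ⟨_, _, h.edist_induce_ne⟩⟩

end

theorem stmt_18_general {V : Type*} (G : SimpleGraph V)
    (hG : IsDistanceCritical G)
    (hmax : ∀ x y : V, x ≠ y → ¬ G.Adj x y → ¬ IsDistanceCritical (addEdge G x y)) :
    ∀ x y : V, x ∉ {u : V | ∃ v b : V, IsDeterminingPair G v u b} →
      y ∉ {u : V | ∃ v b : V, IsDeterminingPair G v u b} →
      x ≠ y → G.Adj x y := by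
  intro x y hx hy hxy
  by_contra hnadj
  have hS : ∀ u, (∃ v b, IsDeterminingPair G v u b) → u ≠ x ∧ u ≠ y :=
    fun u hu => ⟨by rintro rfl; exact hx hu, by rintro rfl; exact hy hu⟩
  refine hmax x y hxy hnadj (isDistanceCritical_iff.2 fun v => ?_)
  obtain ⟨a, b, h⟩ := isDistanceCritical_iff.1 hG v
  obtain ⟨hax, hay⟩ := hS a ⟨v, b, h⟩
  obtain ⟨hbx, hby⟩ := hS b ⟨v, a, h.symm⟩
  exact ⟨a, b, h.congr_adj (fun _ => addEdge_adj_of_ne hax hay)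
    fun _ => addEdge_adj_of_ne hbx hby⟩

theorem stmt_18 {V : Type*} [Fintype V] (G : SimpleGraph V)
    (hG : IsDistanceCritical G)
    (hmax : ∀ x y : V, x ≠ y → ¬ G.Adj x y → ¬ IsDistanceCritical (addEdge G x y)) :
    ∀ x y : V, x ∉ {u : V | ∃ v b : V, IsDeterminingPair G v u b} →
      y ∉ {u : V | ∃ v b : V, IsDeterminingPair G v u b} →
      x ≠ y → G.Adj x y :=
  stmt_18_general G hG hmax
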